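/- Let R be a commutative ring and consider the quotient ring A_n := R[λ_1,…,λ_n]/(σ_1, …, σ_n), where σ_k is the k-th elementary symmetric polynomial. Then A_n is a free R-module of rank n! (this models the oriented cohomology of the full flag variety flag(𝔸^n)). -/

import Mathlib

/-!
We prove more generally that `S[λ₀, …, λₙ₋₁] / (σₖ - cₖ₋₁)` has an `S`-basis of size `n!` for
arbitrary constants `cₖ`, by induction on `n`. Write `λ₀ = -t` and `λ'` for the other variables, so
that `σₖ₊₁(λ) = σₖ₊₁(λ') - t σₖ(λ')`. A triangular change of generators turns the relations into
`σₖ(λ') = hₖ(t)` for `k ≤ n + 1`, where `hₖ = tᵏ + c₀ tᵏ⁻¹ + ⋯ + cₖ₋₁`. Since `σₙ₊₁(λ') = 0`, the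
last one reads `hₙ₊₁(t) = 0`, so the quotient is the `n`-variable quotient of the same shape over
`S[t] / (hₙ₊₁)`, which is free of rank `n + 1` over `S` because `hₙ₊₁` is monic.
-/

open MvPolynomial
open scoped Polynomial Nat

theorem Multiset.esymm_cons_succ {R : Type*} [CommSemiring R] (a : R) (s : Multiset R) (k : ℕ) :
    (a ::ₘ s).esymm (k + 1) = s.esymm (k + 1) + a * s.esymm k := by
  simp [Multiset.esymm, Multiset.powersetCard_cons, Multiset.map_map, Multiset.sum_map_mul_left]

theorem Set.range_fin_succ_eq_insert {α : Type*} (f : ℕ → α) (n : ℕ) :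
    Set.range (fun k : Fin (n + 1) => f k) = insert (f n) (Set.range fun k : Fin n => f k) := by
  rw [← Fin.range_snoc]
  congr 1
  ext k
  cases k using Fin.lastCases <;> simp

theorem Ideal.span_range_eq_of_eq_add_mul {A : Type*} [CommRing A] (t : A) {a w : ℕ → A}
    (hw₀ : w 0 = 0) (hw : ∀ k, w (k + 1) = a k + t * w k) (m : ℕ) :
    span (Set.range fun k : Fin m => a k) = span (Set.range fun k : Fin m => w (k + 1)) := by
  apply le_antisymm <;> rw [span_le]
  · have hmem : ∀ k ≤ m, w k ∈ span (Set.range fun k : Fin m => w (k + 1)) := by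
      rintro (_ | k) hk
      · simp [hw₀]
      · exact subset_span ⟨⟨k, hk⟩, rfl⟩
    rintro _ ⟨k, rfl⟩
    have hak : a k = w (k + 1) - t * w k := by rw [hw]; ring
    show a k ∈ _
    rw [hak]
    exact sub_mem (hmem _ k.2) (mul_mem_left _ _ (hmem _ k.2.le))
  · have hmem : ∀ k ≤ m, w k ∈ span (Set.range fun k : Fin m => a k) := by
      intro k hk
      induction k with
      | zero => simp [hw₀]
      | succ k ih =>
        rw [hw]
        exact add_mem (subset_span ⟨⟨k, hk⟩, rfl⟩) (mul_mem_left _ _ (ih (by omega)))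
    rintro _ ⟨k, rfl⟩
    exact hmem _ k.2

namespace Polynomial

variable {S : Type*} [CommRing S]

/-- `hornerPoly b k = X ^ k + b 0 * X ^ (k - 1) + ⋯ + b (k - 1)`. -/
noncomputable def hornerPoly (b : ℕ → S) : ℕ → S[X]
  | 0 => 1
  | k + 1 => hornerPoly b k * X + C (b k)

theorem monic_hornerPoly (b : ℕ → S) (k : ℕ) : (hornerPoly b k).Monic := by
  nontriviality S
  induction k with
  | zero => exact monic_one
  | succ k ih =>
    refine (ih.mul monic_X).add_of_left (degree_C_le.trans_lt ?_)
    rw [degree_mul_X, degree_eq_natDegree ih.ne_zero]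
    exact_mod_cast Nat.succ_pos _

theorem natDegree_hornerPoly [Nontrivial S] (b : ℕ → S) (k : ℕ) :
    (hornerPoly b k).natDegree = k := by
  induction k with
  | zero => simp [hornerPoly]
  | succ k ih =>
    rw [hornerPoly, natDegree_add_C, natDegree_mul_X (monic_hornerPoly b k).ne_zero, ih]

theorem nonempty_basis_adjoinRoot_hornerPoly (b : ℕ → S) (k : ℕ) :
    Nonempty (Module.Basis (Fin k) S (AdjoinRoot (hornerPoly b k))) := by
  rcases subsingleton_or_nontrivial S with hS | hS
  · have := Module.subsingleton S (AdjoinRoot (hornerPoly b k))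
    exact ⟨.ofEquivFun (LinearEquiv.ofSubsingleton _ _)⟩
  · exact ⟨((AdjoinRoot.powerBasis' (monic_hornerPoly b k)).basis).reindex
      (finCongr (natDegree_hornerPoly b k))⟩

end Polynomial

open Polynomial (hornerPoly)

namespace MvPolynomial

theorem esymm_eq_zero_of_card_lt {σ R : Type*} [Fintype σ] [CommSemiring R] {k : ℕ}
    (hk : Fintype.card σ < k) : esymm σ R k = 0 := by
  simp [esymm, Finset.powersetCard_eq_empty.2 hk]

noncomputable def quotientMapCSupAlgEquiv {σ R : Type*} (S : Type*) [CommRing R]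
    [CommSemiring S] [Algebra S R] (I : Ideal R) (J : Ideal (MvPolynomial σ R)) :
    (MvPolynomial σ R ⧸ I.map C ⊔ J) ≃ₐ[S]
      MvPolynomial σ (R ⧸ I) ⧸ J.map (map (Ideal.Quotient.mk I)) :=
  let f := (Ideal.Quotient.mkₐ S (J.map (map (Ideal.Quotient.mk I)))).comp
    (mapAlgHom (Ideal.Quotient.mkₐ S I))
  have hker : RingHom.ker f = I.map C ⊔ J := by
    change RingHom.ker ((Ideal.Quotient.mk _).comp (map (Ideal.Quotient.mk I))) = _
    rw [← RingHom.comap_ker, Ideal.mk_ker,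
      Ideal.comap_map_of_surjective (map (σ := σ) (Ideal.Quotient.mk I))
        (map_surjective _ Ideal.Quotient.mk_surjective),
      ← RingHom.ker_eq_comap_bot, ker_map, Ideal.mk_ker, sup_comm]
  (Ideal.quotientEquivAlgOfEq S hker.symm).trans <| Ideal.quotientKerAlgEquivOfSurjective <|
    Ideal.Quotient.mk_surjective.comp (map_surjective _ Ideal.Quotient.mk_surjective)

section CoinvariantIdeal

variable (R : Type*) [CommRing R] (n : ℕ)

/-- The relations `σₖ = c (k - 1)` for `1 ≤ k ≤ n`. -/
noncomputable def coinvariantIdeal (c : ℕ → R) : Ideal (MvPolynomial (Fin n) R) :=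
  Ideal.span (Set.range fun k : Fin n => esymm (Fin n) R (k + 1) - C (c k))

theorem coinvariantIdeal_zero : coinvariantIdeal R n 0 =
    Ideal.span (Set.range fun k : Fin n => esymm (Fin n) R (k + 1)) := by
  simp [coinvariantIdeal]

variable {R n}

theorem map_map_coinvariantIdeal {S : Type*} [CommRing S] (f : R →+* S) (c : ℕ → R) :
    (coinvariantIdeal R n c).map (map f) = coinvariantIdeal S n (f ∘ c) := by
  simp [coinvariantIdeal, Ideal.map_span, ← Set.range_comp, Function.comp_def, map_esymm]

variable (R n)

/-- `λ₀ ↦ -X`, `λᵢ₊₁ ↦ λᵢ`. The sign makes the relation satisfied by `X` in the quotient the monic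
`hornerPoly c (n + 1)` itself rather than `±` it. -/
noncomputable def finSuccEquivNegX :
    MvPolynomial (Fin (n + 1)) R ≃ₐ[R] MvPolynomial (Fin n) R[X] :=
  ((renameEquiv R (_root_.finSuccEquiv n)).trans (optionEquivRight R (Fin n))).trans
    (mapAlgEquiv (Fin n) Polynomial.algEquivAevalNegX)

variable {R n}

theorem finSuccEquivNegX_X_zero : finSuccEquivNegX R n (X 0) = -C Polynomial.X := by
  simp [finSuccEquivNegX]

theorem finSuccEquivNegX_X_succ (i : Fin n) : finSuccEquivNegX R n (X i.succ) = X i := by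
  simp [finSuccEquivNegX]

theorem finSuccEquivNegX_C (r : R) : finSuccEquivNegX R n (C r) = C (Polynomial.C r) :=
  (finSuccEquivNegX R n).commutes r

theorem finSuccEquivNegX_esymm_succ (k : ℕ) :
    finSuccEquivNegX R n (esymm (Fin (n + 1)) R (k + 1)) =
      esymm (Fin n) R[X] (k + 1) - C Polynomial.X * esymm (Fin n) R[X] k := by
  have huniv : (Finset.univ : Finset (Fin (n + 1))).val = 0 ::ₘ Finset.univ.val.map Fin.succ := by
    rw [Fin.univ_succ]; rfl
  have hsucc : (finSuccEquivNegX R n ∘ X) ∘ Fin.succ = (X : Fin n → MvPolynomial (Fin n) R[X]) :=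
    _root_.funext finSuccEquivNegX_X_succ
  rw [← AlgEquiv.coe_toAlgHom, aeval_unique (finSuccEquivNegX R n).toAlgHom,
    aeval_esymm_eq_multiset_esymm, huniv, Multiset.map_cons, Multiset.map_map,
    Multiset.esymm_cons_succ, esymm_eq_multiset_esymm, AlgEquiv.coe_toAlgHom, hsucc,
    Function.comp_apply, finSuccEquivNegX_X_zero]
  ring

theorem map_finSuccEquivNegX_coinvariantIdeal (c : ℕ → R) :
    (coinvariantIdeal R (n + 1) c).map (finSuccEquivNegX R n) =
      (Ideal.span {hornerPoly c (n + 1)}).map C ⊔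
        coinvariantIdeal R[X] n (hornerPoly c ∘ (· + 1)) := by
  set w : ℕ → MvPolynomial (Fin n) R[X] := fun k => esymm (Fin n) R[X] k - C (hornerPoly c k)
  have hw : ∀ k, w (k + 1) = finSuccEquivNegX R n (esymm (Fin (n + 1)) R (k + 1) - C (c k)) +
      C Polynomial.X * w k := by
    intro k
    simp only [w, map_sub, finSuccEquivNegX_esymm_succ, finSuccEquivNegX_C, hornerPoly, map_add,
      map_mul]
    ring
  have hlast : w (n + 1) = -C (hornerPoly c (n + 1)) := by
    simp [w, esymm_eq_zero_of_card_lt]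
  rw [coinvariantIdeal, Ideal.map_span, ← Set.range_comp, Function.comp_def,
    Ideal.span_range_eq_of_eq_add_mul _ (by simp [w, hornerPoly]) hw,
    Set.range_fin_succ_eq_insert (fun k => w (k + 1)), Ideal.span_insert, hlast,
    Ideal.span_singleton_neg, Ideal.map_span, Set.image_singleton]
  rfl

end CoinvariantIdeal

end MvPolynomial

universe u

theorem nonempty_basis_quotient_coinvariantIdeal (n : ℕ) :
    ∀ (S : Type u) [CommRing S] (c : ℕ → S),
      Nonempty (Module.Basis (Fin n !) S (MvPolynomial (Fin n) S ⧸ coinvariantIdeal S n c)) := by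
  induction n with
  | zero =>
    intro S _ c
    have hbot : coinvariantIdeal S 0 c = ⊥ := by simp [coinvariantIdeal]
    exact ⟨(Module.Basis.singleton (Fin 1) S).map
      ((Ideal.quotientEquivAlgOfEq S hbot).trans <| (AlgEquiv.quotientBot S _).trans <|
        isEmptyAlgEquiv S (Fin 0)).toLinearEquiv.symm⟩
  | succ n ih =>
    intro S _ c
    obtain ⟨bRoot⟩ := Polynomial.nonempty_basis_adjoinRoot_hornerPoly c (n + 1)
    obtain ⟨bQuot⟩ := ih (AdjoinRoot (hornerPoly c (n + 1)))
      (AdjoinRoot.mk _ ∘ hornerPoly c ∘ (· + 1))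
    let e := (Ideal.quotientEquivAlg _ _ (finSuccEquivNegX S n)
      (map_finSuccEquivNegX_coinvariantIdeal c).symm).trans <|
      (quotientMapCSupAlgEquiv S _ _).trans <|
      Ideal.quotientEquivAlgOfEq S (map_map_coinvariantIdeal _ _)
    exact ⟨((bRoot.smulTower bQuot).reindex
      (finProdFinEquiv.trans (finCongr (Nat.factorial_succ n).symm))).map e.toLinearEquiv.symm⟩

/-- The coinvariant algebra `R[λ₁,…,λₙ]/(σ₁,…,σₙ)` (modeling the oriented cohomology
of the full flag variety `flag(𝔸ⁿ)`) is a free `R`-module of rank `n!`. -/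
theorem stmt_8 (R : Type*) [CommRing R] (n : ℕ) :
    Nonempty ((MvPolynomial (Fin n) R ⧸
        Ideal.span (Set.range fun k : Fin n => MvPolynomial.esymm (Fin n) R (k.1 + 1)))
      ≃ₗ[R] (Fin (Nat.factorial n) → R)) := by
  obtain ⟨b⟩ := nonempty_basis_quotient_coinvariantIdeal n R 0
  rw [coinvariantIdeal_zero] at b
  exact ⟨b.equivFun⟩
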